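/- Let (V,E) be a temporal graph over timestamps {0,…,T} and let α ∈ [0,1]. Every temporal path p' from u to v in (V,E), with first edge at timestamp t_0 and last edge at timestamp t_n, can be lifted to a directed path p in the transformed graph G' from the replica (u,t_0) to the replica (v,t_n) (using a snapshot edge for each timestamped edge of p' and waiting edges between consecutive timestamps) such that ℓ(p) = L(p'). -/

import Mathlib

open scoped ENNReal BigOperators

variable {V : Type*}

/-- `p` is a temporal path from `u` to `v` with edges in `E`:
a nonempty list of timestamped edges, consecutive in space and
with nondecreasing timestamps. -/
def IsTempPath (E : Set (V × V × ℕ)) (u v : V) (p : List (V × V × ℕ)) : Prop :=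
  p ≠ [] ∧ (∀ e ∈ p, e ∈ E) ∧
    List.Chain' (fun e f : V × V × ℕ => e.2.1 = f.1 ∧ e.2.2 ≤ f.2.2) p ∧
    p.head?.map Prod.fst = some u ∧
    p.getLast?.map (fun e => e.2.1) = some v

/-- Timestamp of the first edge of a temporal path. -/
def firstTime (p : List (V × V × ℕ)) : ℕ := (p.head?.map (fun e => e.2.2)).getD 0

/-- Timestamp of the last edge of a temporal path. -/
def lastTime (p : List (V × V × ℕ)) : ℕ := (p.getLast?.map (fun e => e.2.2)).getD 0

/-- Cost `L_α(p) = α·(number of edges) + (1-α)·(t_n - t_0)` of a temporal path. -/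
noncomputable def costL (α : ℝ) (p : List (V × V × ℕ)) : ℝ :=
  α * p.length + (1 - α) * ((lastTime p : ℝ) - (firstTime p : ℝ))

/-- Shortest-fastest-path distance: infimum of `L_α` over temporal paths from `u` to `v`,
taken in `ℝ≥0∞` (so `∞` if no temporal path exists). -/
noncomputable def sfpDist (α : ℝ) (E : Set (V × V × ℕ)) (u v : V) : ℝ≥0∞ :=
  sInf {c : ℝ≥0∞ | ∃ p, IsTempPath E u v p ∧ c = ENNReal.ofReal (costL α p)}

/-- Adjacency of the transformed graph `G'` on `V × {0,…,T}`:
waiting edges `(v,t) → (v,t+1)` and snapshot edges `(u,t) → (v,t)` for `(u,v,t) ∈ E`. -/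
def TransAdj (E : Set (V × V × ℕ)) (T : ℕ) : V × ℕ → V × ℕ → Prop := fun a b =>
  (a.1 = b.1 ∧ b.2 = a.2 + 1 ∧ b.2 ≤ T) ∨ ((a.1, b.1, a.2) ∈ E ∧ b.2 = a.2)

/-- Weight of an edge of the transformed graph: `α` for snapshot edges (same timestamp),
`1 - α` for waiting edges. -/
noncomputable def transWeight (α : ℝ) (a b : V × ℕ) : ℝ := if a.2 = b.2 then α else 1 - α

/-- Length `ℓ` of a path in the transformed graph (given as its list of visited vertices):
the sum of the weights of its edges. -/
noncomputable def transLen (α : ℝ) (p : List (V × ℕ)) : ℝ :=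
  ((p.zip p.tail).map fun ab => transWeight α ab.1 ab.2).sum

/-- `p` is a directed path in the transformed graph from `x` to `y`,
given as its (nonempty) list of visited vertices. -/
def IsTransPath (E : Set (V × V × ℕ)) (T : ℕ) (x y : V × ℕ) (p : List (V × ℕ)) : Prop :=
  p ≠ [] ∧ List.Chain' (TransAdj E T) p ∧ p.head? = some x ∧ p.getLast? = some y

/-- Projection of a transformed-graph path to a list of timestamped edges:
delete the waiting edges and read each snapshot edge `((x,t),(y,t))` as `(x,y,t)`. -/
def project (p : List (V × ℕ)) : List (V × V × ℕ) :=
  ((p.zip p.tail).filter fun ab => ab.1.2 == ab.2.2).map fun ab => (ab.1.1, ab.2.1, ab.1.2)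

/-- Shortest-path distance in the transformed graph, in `ℝ≥0∞`. -/
noncomputable def transDist (E : Set (V × V × ℕ)) (T : ℕ) (α : ℝ) (x y : V × ℕ) : ℝ≥0∞ :=
  sInf {c : ℝ≥0∞ | ∃ p, IsTransPath E T x y p ∧ c = ENNReal.ofReal (transLen α p)}

/-- Shortest-path distance (number of edges) in a static graph with adjacency `A`,
in `ℝ≥0∞`: the infimum of the number of edges over (nonempty) walks from `u` to `v`. -/
noncomputable def staticDist (A : V → V → Prop) (u v : V) : ℝ≥0∞ :=
  sInf {c : ℝ≥0∞ | ∃ p : List (V × V), p ≠ [] ∧ (∀ e ∈ p, A e.1 e.2) ∧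
    List.Chain' (fun e f : V × V => e.2 = f.1) p ∧
    p.head?.map Prod.fst = some u ∧ p.getLast?.map Prod.snd = some v ∧
    c = (p.length : ℝ≥0∞)}

/-- Per-pair temporal inefficiency `[(1 - α/d(v,u)) + (1 - α/d(u,v))]/2`,
with the convention `α/∞ = 0` (via `ENNReal.toReal`). -/
noncomputable def perPairIneff (α : ℝ) (E : Set (V × V × ℕ)) (u v : V) : ℝ :=
  ((1 - α / (sfpDist α E v u).toReal) + (1 - α / (sfpDist α E u v).toReal)) / 2

/-- Temporal network inefficiency: the sum of the per-pair inefficiency over unordered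
pairs of distinct vertices (the summand is symmetric, so we sum over ordered pairs and
halve). -/
noncomputable def tempIneff (α : ℝ) (E : Set (V × V × ℕ)) [Fintype V] [DecidableEq V] : ℝ :=
  (∑ q ∈ Finset.univ.offDiag, perPairIneff α E (Prod.fst q) (Prod.snd q)) / 2

/-- Temporal edges of the subgraph induced by `S`. -/
def inducedE (E : Set (V × V × ℕ)) (S : Set V) : Set (V × V × ℕ) :=
  {e ∈ E | e.1 ∈ S ∧ e.2.1 ∈ S}

/-- Temporal network inefficiency of the temporal subgraph induced by a finite set `S`. -/
noncomputable def tempIneffOn (α : ℝ) (E : Set (V × V × ℕ)) [DecidableEq V]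
    (S : Finset V) : ℝ :=
  (∑ q ∈ S.offDiag, perPairIneff α (inducedE E ↑S) (Prod.fst q) (Prod.snd q)) / 2

/-- Static network inefficiency `Σ_{u ≠ v ∈ S} (1 - 1/d_{G[S]}(u,v))` (unordered pairs,
with `1/∞ = 0`) of the subgraph induced by `S` in the static graph with adjacency `A`. -/
noncomputable def staticIneffOn (A : V → V → Prop) [DecidableEq V] (S : Finset V) : ℝ :=
  (∑ q ∈ S.offDiag,
    (1 - 1 / (staticDist (fun x y => A x y ∧ x ∈ S ∧ y ∈ S)
      (Prod.fst q) (Prod.snd q)).toReal)) / 2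

/-!
A temporal path is lifted edge by edge: from the current replica `(a, t)`, wait at `a` until
the timestamp `s ≥ t` of the next edge `(a, b, s)`, then take the snapshot edge
`(a, s) → (b, s)`. Each timestamped edge contributes one snapshot edge of weight `α`, and the
waiting edges telescope to `t_n - t_0` edges of weight `1 - α`.
-/

section Lift

lemma transLen_cons_cons (α : ℝ) (x y : V × ℕ) (l : List (V × ℕ)) :
    transLen α (x :: y :: l) = transWeight α x y + transLen α (y :: l) := by
  simp [transLen]

lemma project_cons_cons (x y : V × ℕ) (l : List (V × ℕ)) :
    project (x :: y :: l) =
      (if x.2 = y.2 then [(x.1, y.1, x.2)] else []) ++ project (y :: l) := by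
  by_cases h : x.2 = y.2 <;> simp [project, h]

/-- `waitThen a t k l` waits `k` steps at `a` from time `t`, i.e. it is
`(a, t) :: (a, t + 1) :: … :: (a, t + k) :: l`. -/
def waitThen (a : V) (t : ℕ) : ℕ → List (V × ℕ) → List (V × ℕ)
  | 0, l => (a, t) :: l
  | k + 1, l => waitThen a t k ((a, t + k + 1) :: l)

section Waiting

variable (a : V) (t : ℕ)

lemma exists_waitThen_eq_cons (k : ℕ) (l : List (V × ℕ)) :
    ∃ q, waitThen a t k l = (a, t) :: q := by
  induction k generalizing l with
  | zero => exact ⟨l, rfl⟩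
  | succ k ih => exact ih _

lemma getLast?_waitThen (k : ℕ) (l : List (V × ℕ)) :
    (waitThen a t k l).getLast? = ((a, t + k) :: l).getLast? := by
  induction k generalizing l with
  | zero => rfl
  | succ k ih => simp [waitThen, ih, ← add_assoc]

lemma isChain_waitThen {E : Set (V × V × ℕ)} {T : ℕ} (k : ℕ) (l : List (V × ℕ))
    (hk : t + k ≤ T) (hl : List.IsChain (TransAdj E T) ((a, t + k) :: l)) :
    List.IsChain (TransAdj E T) (waitThen a t k l) := by
  induction k generalizing l with
  | zero => exact hl
  | succ k ih =>
    refine ih _ (by omega) (hl.cons_cons ?_)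
    exact Or.inl ⟨rfl, rfl, hk⟩

lemma project_waitThen (k : ℕ) (l : List (V × ℕ)) :
    project (waitThen a t k l) = project ((a, t + k) :: l) := by
  induction k generalizing l with
  | zero => rfl
  | succ k ih => simp [waitThen, ih, project_cons_cons, ← add_assoc]

lemma transLen_waitThen (α : ℝ) (k : ℕ) (l : List (V × ℕ)) :
    transLen α (waitThen a t k l) = (1 - α) * k + transLen α ((a, t + k) :: l) := by
  induction k generalizing l with
  | zero => simp [waitThen]
  | succ k ih =>
    rw [waitThen, ih, transLen_cons_cons, transWeight, if_neg (by simp)]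
    push_cast
    ring_nf

end Waiting

def DepartsFrom (x : V × ℕ) (e : V × V × ℕ) : Prop := x.1 = e.1 ∧ x.2 ≤ e.2.2

-- An edge `e = (a, b, s)` arrives at the replica `e.2 = (b, s)`.
def arrival (x : V × ℕ) (p' : List (V × V × ℕ)) : V × ℕ :=
  (p'.getLast?.map Prod.snd).getD x

lemma arrival_cons (x : V × ℕ) (e : V × V × ℕ) (p' : List (V × V × ℕ)) :
    arrival x (e :: p') = arrival e.2 p' := by
  cases p' <;> simp [arrival, List.getLast?_cons]

def liftFrom : V × ℕ → List (V × V × ℕ) → List (V × ℕ)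
  | x, [] => [x]
  | x, e :: p' => waitThen x.1 x.2 (e.2.2 - x.2) (liftFrom e.2 p')

lemma exists_liftFrom_eq_cons (x : V × ℕ) (p' : List (V × V × ℕ)) :
    ∃ q, liftFrom x p' = x :: q := by
  cases p' with
  | nil => exact ⟨[], rfl⟩
  | cons e p' => exact exists_waitThen_eq_cons _ _ _ _

lemma getLast?_liftFrom (x : V × ℕ) (p' : List (V × V × ℕ)) :
    (liftFrom x p').getLast? = some (arrival x p') := by
  induction p' generalizing x with
  | nil => rfl
  | cons e p' ih =>
    obtain ⟨q, hq⟩ := exists_liftFrom_eq_cons e.2 p'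
    rw [liftFrom, getLast?_waitThen, hq, List.getLast?_cons_cons, ← hq, ih, arrival_cons]

variable {x : V × ℕ} {p' : List (V × V × ℕ)}

lemma transLen_liftFrom (α : ℝ) (hx : ∀ e ∈ p'.head?, DepartsFrom x e)
    (hp' : List.IsChain (fun e f => DepartsFrom e.2 f) p') :
    transLen α (liftFrom x p') =
      α * p'.length + (1 - α) * (((arrival x p').2 : ℝ) - x.2) := by
  induction p' generalizing x with
  | nil => simp [liftFrom, transLen, arrival]
  | cons e p' ih =>
    have hxe : x.2 ≤ e.2.2 := (hx e rfl).2
    obtain ⟨q, hq⟩ := exists_liftFrom_eq_cons e.2 p'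
    have ih' := ih (List.isChain_cons.1 hp').1 (List.isChain_cons.1 hp').2
    rw [liftFrom, transLen_waitThen, Nat.add_sub_cancel' hxe, hq, transLen_cons_cons, ← hq, ih',
      transWeight, if_pos rfl, arrival_cons, List.length_cons]
    push_cast [hxe]
    ring

lemma project_liftFrom (hx : ∀ e ∈ p'.head?, DepartsFrom x e)
    (hp' : List.IsChain (fun e f => DepartsFrom e.2 f) p') :
    project (liftFrom x p') = p' := by
  induction p' generalizing x with
  | nil => rfl
  | cons e p' ih =>
    obtain ⟨hxe1, hxe2⟩ := hx e rfl
    obtain ⟨q, hq⟩ := exists_liftFrom_eq_cons e.2 p'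
    have ih' := ih (List.isChain_cons.1 hp').1 (List.isChain_cons.1 hp').2
    rw [liftFrom, project_waitThen, Nat.add_sub_cancel' hxe2, hq, project_cons_cons, ← hq, ih',
      if_pos rfl, hxe1]
    rfl

lemma isChain_liftFrom {E : Set (V × V × ℕ)} {T : ℕ} (hT : ∀ e ∈ E, e.2.2 ≤ T)
    (hE : ∀ e ∈ p', e ∈ E) (hx : ∀ e ∈ p'.head?, DepartsFrom x e)
    (hp' : List.IsChain (fun e f => DepartsFrom e.2 f) p') :
    List.IsChain (TransAdj E T) (liftFrom x p') := by
  induction p' generalizing x with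
  | nil => exact List.isChain_singleton x
  | cons e p' ih =>
    obtain ⟨hxe1, hxe2⟩ := hx e rfl
    have heE : e ∈ E := hE e List.mem_cons_self
    obtain ⟨q, hq⟩ := exists_liftFrom_eq_cons e.2 p'
    have ih' := ih (fun f hf => hE f (List.mem_cons_of_mem e hf))
      (List.isChain_cons.1 hp').1 (List.isChain_cons.1 hp').2
    refine isChain_waitThen _ _ _ _ ?_ ?_ <;> rw [Nat.add_sub_cancel' hxe2]
    · exact hT e heE
    · rw [hq] at ih' ⊢
      exact ih'.cons_cons (Or.inr ⟨by simpa [hxe1] using heE, rfl⟩)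

end Lift

theorem stmt1_general (T : ℕ) (E : Set (V × V × ℕ)) (α : ℝ)
    (hT : ∀ e ∈ E, e.2.2 ≤ T)
    (u v : V) (p' : List (V × V × ℕ)) (hp' : IsTempPath E u v p') :
    ∃ p : List (V × ℕ), IsTransPath E T (u, firstTime p') (v, lastTime p') p ∧
      project p = p' ∧ transLen α p = costL α p' := by
  obtain ⟨hne, hE, hchain, hhead, hlast⟩ := hp'
  obtain ⟨e, rest, rfl⟩ := List.exists_cons_of_ne_nil hne
  have heu : e.1 = u := by simpa using hhead
  set x : V × ℕ := (u, e.2.2)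
  have hx : ∀ f ∈ (e :: rest).head?, DepartsFrom x f := by
    simp [x, DepartsFrom, heu]
  have harrival : arrival x (e :: rest) = (v, lastTime (e :: rest)) := by
    obtain ⟨z, hz⟩ := List.getLast?_isSome.2 hne |> Option.isSome_iff_exists.1
    have hzv : z.2.1 = v := by simpa [hz] using hlast
    simp [arrival, lastTime, hz, ← hzv]
  obtain ⟨q, hq⟩ := exists_liftFrom_eq_cons x (e :: rest)
  refine ⟨liftFrom x (e :: rest), ⟨by simp [hq], isChain_liftFrom hT hE hx hchain, ?_, ?_⟩,
    project_liftFrom hx hchain, ?_⟩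
  · simp [hq, x, firstTime]
  · rw [getLast?_liftFrom, harrival]
  · rw [transLen_liftFrom α hx hchain, harrival, costL]
    simp [x, firstTime]

/-- every temporal path `p'` from `u` to `v` lifts to a directed path in
the transformed graph `G'` from the replica `(u,t_0)` to the replica `(v,t_n)` (using a
snapshot edge per timestamped edge and waiting edges in between, i.e. projecting back
to `p'`) of the same length/cost. -/
theorem stmt1 (T : ℕ) (E : Set (V × V × ℕ)) (α : ℝ)
    (hsym : ∀ u v t, (u, v, t) ∈ E ↔ (v, u, t) ∈ E)
    (hT : ∀ e ∈ E, e.2.2 ≤ T) (hα0 : 0 ≤ α) (hα1 : α ≤ 1)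
    (u v : V) (p' : List (V × V × ℕ)) (hp' : IsTempPath E u v p') :
    ∃ p : List (V × ℕ), IsTransPath E T (u, firstTime p') (v, lastTime p') p ∧
      project p = p' ∧ transLen α p = costL α p' :=
  stmt1_general T E α hT u v p' hp'
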